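/- Let P be positive definite with PA + A'P ≤ 0 and suppose (C, A) is detectable. Then every solution ε of ε̇ = (A - αP⁻¹C'C)ε with α > 0 converges to 0 as t → ∞. -/

import Mathlib

/-!
By LaSalle's invariance principle. `V x = x ⬝ᵥ P *ᵥ x` is a Lyapunov function for `ε' = M ε`,
`M = A - α P⁻¹ Cᵀ C`: along solutions its derivative is `x ⬝ᵥ (P A + Aᵀ P) *ᵥ x - 2 α ‖C x‖² ≤ 0`.
So `V (ε t)` decreases to some `c`, and `ε` stays bounded. If `ε (tₖ) → y`, the solution
`ω s = exp (s M) y` is the limit of the shifted trajectories `ε (tₖ + s)`, so `V ∘ ω ≡ c` and the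
derivative of `V` vanishes along `ω`. This forces `C ω ≡ 0`, hence `ω' = A ω`, and detectability
gives `ω → 0`. Thus `c = V 0 = 0`, and `ε → 0` because `P` is positive definite.
-/

open Matrix Filter Topology NormedSpace

attribute [local instance] Matrix.linftyOpNormedAddCommGroup Matrix.linftyOpNormedRing
  Matrix.linftyOpNormedAlgebra

variable {ι κ : Type*} [Fintype ι]

theorem HasDerivAt.const_mulVec (Q : Matrix κ ι ℝ) {x : ℝ → ι → ℝ} {x' : ι → ℝ} {t : ℝ}
    (hx : HasDerivAt x x' t) : HasDerivAt (fun s => Q *ᵥ x s) (Q *ᵥ x') t := by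
  rw [hasDerivAt_pi] at hx ⊢
  exact fun i => HasDerivAt.fun_sum fun j _ => (hx j).const_mul (Q i j)

theorem HasDerivAt.mulVec_const {N : ℝ → Matrix κ ι ℝ} {N' : Matrix κ ι ℝ} {t : ℝ}
    (hN : HasDerivAt N N' t) (y : ι → ℝ) : HasDerivAt (fun s => N s *ᵥ y) (N' *ᵥ y) t := by
  rw [hasDerivAt_pi]
  exact fun i => HasDerivAt.fun_sum fun j _ =>
    (hasDerivAt_pi.mp (hasDerivAt_pi.mp hN i) j).mul_const (y j)

theorem HasDerivAt.dotProduct {x y : ℝ → ι → ℝ} {x' y' : ι → ℝ} {t : ℝ}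
    (hx : HasDerivAt x x' t) (hy : HasDerivAt y y' t) :
    HasDerivAt (fun s => x s ⬝ᵥ y s) (x' ⬝ᵥ y t + x t ⬝ᵥ y') t := by
  rw [hasDerivAt_pi] at hx hy
  simpa [_root_.dotProduct, Finset.sum_add_distrib] using
    HasDerivAt.fun_sum fun i _ => (hx i).mul (hy i)

namespace Matrix

theorem continuous_dotProduct_mulVec (P : Matrix ι ι ℝ) :
    Continuous fun x : ι → ℝ => x ⬝ᵥ P *ᵥ x :=
  continuous_id.dotProduct (continuous_const.matrix_mulVec continuous_id)

theorem dotProduct_transpose_mul_mulVec [Fintype κ] (C : Matrix κ ι ℝ) (x : ι → ℝ) :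
    x ⬝ᵥ (Cᵀ * C) *ᵥ x = (C *ᵥ x) ⬝ᵥ (C *ᵥ x) := by
  rw [← mulVec_mulVec, dotProduct_mulVec, vecMul_transpose]

theorem dotProduct_mulVec_smul_self (P : Matrix ι ι ℝ) (c : ℝ) (x : ι → ℝ) :
    (c • x) ⬝ᵥ P *ᵥ (c • x) = c ^ 2 * (x ⬝ᵥ P *ᵥ x) := by
  simp only [mulVec_smul, smul_dotProduct, dotProduct_smul, smul_eq_mul]
  ring

theorem PosDef.exists_pos_mul_sq_norm_le {P : Matrix ι ι ℝ} (hP : P.PosDef) :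
    ∃ m > 0, ∀ x : ι → ℝ, m * ‖x‖ ^ 2 ≤ x ⬝ᵥ P *ᵥ x := by
  obtain ⟨m, hm, hmin⟩ := (isCompact_sphere (0 : ι → ℝ) 1).exists_forall_le'
    (continuous_dotProduct_mulVec P).continuousOn
    (a := 0) fun u hu => hP.dotProduct_mulVec_pos (ne_zero_of_mem_unit_sphere ⟨u, hu⟩)
  refine ⟨m, hm, fun x => ?_⟩
  rcases eq_or_ne x 0 with rfl | hx
  · simp
  · have hx' : ‖x‖ ≠ 0 := norm_ne_zero_iff.mpr hx
    have hu : ‖x‖⁻¹ • x ∈ Metric.sphere (0 : ι → ℝ) 1 := by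
      simp [norm_smul, hx']
    calc m * ‖x‖ ^ 2 ≤ (‖x‖⁻¹ • x) ⬝ᵥ P *ᵥ (‖x‖⁻¹ • x) * ‖x‖ ^ 2 := by
          gcongr; exact hmin _ hu
      _ = x ⬝ᵥ P *ᵥ x := by
          rw [dotProduct_mulVec_smul_self]; field_simp

theorem PosDef.tendsto_zero_of_tendsto_dotProduct_mulVec {P : Matrix ι ι ℝ} (hP : P.PosDef)
    {α : Type*} {l : Filter α} {x : α → ι → ℝ}
    (h : Tendsto (fun a => x a ⬝ᵥ P *ᵥ x a) l (𝓝 0)) : Tendsto x l (𝓝 0) := by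
  obtain ⟨m, hm, hcoer⟩ := hP.exists_pos_mul_sq_norm_le
  have hsq : Tendsto (fun a => ‖x a‖ ^ 2) l (𝓝 0) :=
    squeeze_zero (fun _ => sq_nonneg _) (fun a => (le_div_iff₀' hm).mpr (hcoer (x a)))
      (by simpa using h.div_const m)
  rw [tendsto_zero_iff_norm_tendsto_zero]
  simpa using hsq.sqrt

theorem PosDef.isBounded_setOf_dotProduct_mulVec_le {P : Matrix ι ι ℝ} (hP : P.PosDef) (c : ℝ) :
    Bornology.IsBounded {x : ι → ℝ | x ⬝ᵥ P *ᵥ x ≤ c} := by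
  obtain ⟨m, hm, hcoer⟩ := hP.exists_pos_mul_sq_norm_le
  refine (Metric.isBounded_closedBall (x := 0) (r := √(c / m))).subset fun x hx => ?_
  rw [mem_closedBall_zero_iff]
  exact Real.le_sqrt_of_sq_le ((le_div_iff₀' hm).mpr ((hcoer x).trans hx))

theorem PosDef.mul_sub_smul_inv_add_transpose_mul {P : Matrix ι ι ℝ} [DecidableEq ι]
    (hP : P.PosDef) (A B : Matrix ι ι ℝ) (α : ℝ) :
    P * (A - α • (P⁻¹ * B)) + (A - α • (P⁻¹ * B))ᵀ * P = P * A + Aᵀ * P - α • (B + Bᵀ) := by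
  have hdet : IsUnit P.det := isUnit_iff_ne_zero.mpr hP.det_pos.ne'
  have hPt : Pᵀ = P := hP.isHermitian
  simp only [Matrix.mul_sub, Matrix.sub_mul, transpose_sub, transpose_smul, transpose_mul,
    transpose_nonsing_inv, hPt, Matrix.mul_smul, Matrix.smul_mul, ← Matrix.mul_assoc,
    mul_nonsing_inv P hdet, Matrix.one_mul]
  rw [Matrix.mul_assoc Bᵀ, nonsing_inv_mul P hdet, Matrix.mul_one, smul_add]
  abel

end Matrix

section LinearFlow

variable [DecidableEq ι] {M : Matrix ι ι ℝ}

theorem hasDerivAt_exp_smul_mulVec (M : Matrix ι ι ℝ) (y : ι → ℝ) (t : ℝ) :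
    HasDerivAt (fun s => exp (s • M) *ᵥ y) (M *ᵥ (exp (t • M) *ᵥ y)) t := by
  rw [mulVec_mulVec]
  exact (hasDerivAt_exp_smul_const' M t).mulVec_const y

theorem eq_exp_smul_mulVec_of_hasDerivAt {x : ℝ → ι → ℝ}
    (hx : ∀ t, HasDerivAt x (M *ᵥ x t) t) (t s : ℝ) :
    x (t + s) = exp (s • M) *ᵥ x t := by
  have hlip : LipschitzWith ‖(mulVecLin M).toContinuousLinearMap‖₊ (M *ᵥ ·) :=
    (mulVecLin M).toContinuousLinearMap.lipschitz
  have := ODE_solution_unique_univ (v := fun _ => (M *ᵥ ·)) (s := fun _ => Set.univ) (t₀ := 0)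
    (f := fun s => x (t + s)) (g := fun s => exp (s • M) *ᵥ x t)
    (fun _ => hlip.lipschitzOnWith) (fun s => ⟨(hx (t + s)).comp_const_add t s, trivial⟩)
    (fun s => ⟨hasDerivAt_exp_smul_mulVec M (x t) s, trivial⟩) (by simp)
  exact congrFun this s

end LinearFlow

section Lyapunov

variable {P M : Matrix ι ι ℝ} {x : ℝ → ι → ℝ}

theorem hasDerivAt_dotProduct_mulVec_of_hasDerivAt (hx : ∀ t, HasDerivAt x (M *ᵥ x t) t)
    (t : ℝ) :
    HasDerivAt (fun s => x s ⬝ᵥ P *ᵥ x s) (x t ⬝ᵥ (P * M + Mᵀ * P) *ᵥ x t) t := by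
  convert (hx t).dotProduct ((hx t).const_mulVec P) using 1
  rw [add_mulVec, dotProduct_add, ← mulVec_mulVec, ← mulVec_mulVec, dotProduct_mulVec (x t) Mᵀ,
    vecMul_transpose, add_comm]

theorem antitone_dotProduct_mulVec (hQ : ∀ v, v ⬝ᵥ (P * M + Mᵀ * P) *ᵥ v ≤ 0)
    (hx : ∀ t, HasDerivAt x (M *ᵥ x t) t) : Antitone fun t => x t ⬝ᵥ P *ᵥ x t :=
  have hV := hasDerivAt_dotProduct_mulVec_of_hasDerivAt (P := P) hx
  antitone_of_deriv_nonpos (fun t => (hV t).differentiableAt) fun t => (hV t).deriv ▸ hQ (x t)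

end Lyapunov

section LaSalle

variable [DecidableEq ι] {P M : Matrix ι ι ℝ} {x : ℝ → ι → ℝ}

theorem exists_tendsto_dotProduct_mulVec_and_exp_smul_mulVec_eq (hP : P.PosDef)
    (hQ : ∀ v, v ⬝ᵥ (P * M + Mᵀ * P) *ᵥ v ≤ 0) (hx : ∀ t, HasDerivAt x (M *ᵥ x t) t) :
    ∃ (c : ℝ) (y : ι → ℝ), Tendsto (fun t => x t ⬝ᵥ P *ᵥ x t) atTop (𝓝 c) ∧
      ∀ s : ℝ, (exp (s • M) *ᵥ y) ⬝ᵥ P *ᵥ (exp (s • M) *ᵥ y) = c := by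
  have hanti := antitone_dotProduct_mulVec hQ hx
  have htend := tendsto_atTop_ciInf hanti
    ⟨0, Set.forall_mem_range.mpr fun t => hP.posSemidef.dotProduct_mulVec_nonneg (x t)⟩
  obtain ⟨y, -, φ, hφ, hy⟩ := tendsto_subseq_of_bounded
    (hP.isBounded_setOf_dotProduct_mulVec_le (x 0 ⬝ᵥ P *ᵥ x 0)) (x := fun k : ℕ => x k)
    fun k => hanti k.cast_nonneg
  refine ⟨_, y, htend, fun s => ?_⟩
  have hshift : Tendsto (fun k => x (φ k + s)) atTop (𝓝 (exp (s • M) *ᵥ y)) := by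
    simp_rw [eq_exp_smul_mulVec_of_hasDerivAt hx]
    exact ((continuous_const.matrix_mulVec continuous_id).tendsto y).comp hy
  refine tendsto_nhds_unique ?_ (htend.comp (tendsto_atTop_add_const_right _ s
    (tendsto_natCast_atTop_atTop.comp hφ.tendsto_atTop)))
  exact ((continuous_dotProduct_mulVec P).tendsto _).comp hshift

theorem tendsto_zero_of_laSalle (hP : P.PosDef)
    (hQ : ∀ v, v ⬝ᵥ (P * M + Mᵀ * P) *ᵥ v ≤ 0)
    (hinv : ∀ ω : ℝ → ι → ℝ, (∀ t, HasDerivAt ω (M *ᵥ ω t) t) →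
      (∀ t, ω t ⬝ᵥ (P * M + Mᵀ * P) *ᵥ ω t = 0) → Tendsto ω atTop (𝓝 0))
    (hx : ∀ t, HasDerivAt x (M *ᵥ x t) t) : Tendsto x atTop (𝓝 0) := by
  obtain ⟨c, y, htend, hconst⟩ := exists_tendsto_dotProduct_mulVec_and_exp_smul_mulVec_eq hP hQ hx
  set ω : ℝ → ι → ℝ := fun s => exp (s • M) *ᵥ y
  have hω : ∀ t, HasDerivAt ω (M *ᵥ ω t) t := hasDerivAt_exp_smul_mulVec M y
  have hωQ : ∀ t, ω t ⬝ᵥ (P * M + Mᵀ * P) *ᵥ ω t = 0 := fun t =>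
    (hasDerivAt_dotProduct_mulVec_of_hasDerivAt hω t).unique
      (by simpa only [ω, hconst] using hasDerivAt_const t c)
  have hc : c = 0 := by
    have := ((continuous_dotProduct_mulVec P).tendsto 0).comp (hinv ω hω hωQ)
    simp only [Function.comp_def, ω, hconst, mulVec_zero, dotProduct_zero] at this
    exact tendsto_nhds_unique tendsto_const_nhds this
  exact hP.tendsto_zero_of_tendsto_dotProduct_mulVec (hc ▸ htend)

end LaSalle

/-- dissipativity plus detectability imply that every solution of
ε̇ = (A - αP⁻¹C'C)ε with α > 0 converges to 0. -/
theorem stmt2 {n p : ℕ}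
    (P A : Matrix (Fin n) (Fin n) ℝ) (C : Matrix (Fin p) (Fin n) ℝ)
    (hP : P.PosDef)
    (hdiss : ∀ x : Fin n → ℝ, x ⬝ᵥ (P * A + Aᵀ * P) *ᵥ x ≤ 0)
    (hdet : ∀ ω : ℝ → Fin n → ℝ,
      (∀ t, HasDerivAt ω (A *ᵥ ω t) t) →
      (∀ t, 0 ≤ t → C *ᵥ ω t = 0) →
      Tendsto ω atTop (𝓝 0))
    (α : ℝ) (hα : 0 < α)
    (ε : ℝ → Fin n → ℝ)
    (hε : ∀ t, HasDerivAt ε ((A - α • (P⁻¹ * Cᵀ * C)) *ᵥ ε t) t) :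
    Tendsto ε atTop (𝓝 0) := by
  set M := A - α • (P⁻¹ * Cᵀ * C) with hM
  have hQ (x : Fin n → ℝ) : x ⬝ᵥ (P * M + Mᵀ * P) *ᵥ x
      = x ⬝ᵥ (P * A + Aᵀ * P) *ᵥ x - 2 * α * ((C *ᵥ x) ⬝ᵥ (C *ᵥ x)) := by
    rw [hM, Matrix.mul_assoc, hP.mul_sub_smul_inv_add_transpose_mul, transpose_mul,
      transpose_transpose, ← two_smul ℝ (Cᵀ * C), smul_smul, sub_mulVec, dotProduct_sub,
      smul_mulVec, dotProduct_smul, dotProduct_transpose_mul_mulVec, smul_eq_mul, mul_comm α]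
  have hCC (x : Fin n → ℝ) : 0 ≤ (C *ᵥ x) ⬝ᵥ (C *ᵥ x) := by
    simpa using dotProduct_self_star_nonneg (C *ᵥ x)
  refine tendsto_zero_of_laSalle hP (fun x => ?_) (fun ω hω hωQ => ?_) hε
  · nlinarith [hQ x, hdiss x, hCC x]
  · have hCω (t : ℝ) : C *ᵥ ω t = 0 := by
      have := hQ (ω t)
      rw [hωQ t] at this
      exact dotProduct_self_eq_zero.mp (by nlinarith [hdiss (ω t), hCC (ω t)])
    refine hdet ω (fun t => ?_) fun t _ => hCω t
    simpa [hM, sub_mulVec, smul_mulVec, ← mulVec_mulVec, hCω t] using hω t
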